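/- Every sentence φ over a finite signature Δ is semantically equivalent to a finite disjunction of game sentences: there exists a gameboard tree tr with root Δ and a set Ψ ⊆ Θ_tr of game sentences such that φ ↔ ⋁Ψ is valid in all pointed models over Δ. -/

import Mathlib

/-- Actions over a set `R` of binary relation symbols. -/
inductive Act (R : Type) : Type
  | rel : R → Act R
  | union : Act R → Act R → Act R
  | comp : Act R → Act R → Act R
  | star : Act R → Act R

/-- A Kripke structure over relation symbols `R` and propositional symbols `P`,
with set of worlds `W` (interpretations of nominals are given separately). -/
structure Kripke (R P W : Type) where
  rel : R → W → W → Prop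
  val : W → P → Prop

/-- Interpretation of actions as accessibility relations. -/
def actRel {R P W : Type} (M : Kripke R P W) : Act R → W → W → Prop
  | .rel r => M.rel r
  | .union a b => fun w v => actRel M a w v ∨ actRel M b w v
  | .comp a b => fun w v => ∃ u, actRel M a w u ∧ actRel M b u v
  | .star a => Relation.ReflTransGen (actRel M a)

/-- Sentences of hybrid-dynamic propositional logic, indexed by the type `N` of
nominals (including variables); binders extend the nominal type by `Option`. -/
inductive Sen (R P : Type) : Type → Type 1
  | prop {N : Type} : P → Sen R P N
  | nom {N : Type} : N → Sen R P N
  | conj {N : Type} (n : ℕ) : (Fin n → Sen R P N) → Sen R P N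
  | neg {N : Type} : Sen R P N → Sen R P N
  | pos {N : Type} : Act R → Sen R P N → Sen R P N
  | at_ {N : Type} : N → Sen R P N → Sen R P N
  | store {N : Type} : Sen R P (Option N) → Sen R P N
  | ex {N : Type} : Sen R P (Option N) → Sen R P N

/-- Extend a nominal interpretation by interpreting the fresh variable as `w`. -/
def extOpt {N W : Type} (g : N → W) (w : W) : Option N → W :=
  fun o => o.elim w g

/-- Local satisfaction. -/
def sat {R P W : Type} (M : Kripke R P W) : {N : Type} → (N → W) → W → Sen R P N → Prop
  | _, g, w, .prop p => M.val w p
  | _, g, w, .nom k => w = g k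
  | _, g, w, .conj _ f => ∀ i, sat M g w (f i)
  | _, g, w, .neg φ => ¬ sat M g w φ
  | _, g, w, .pos a φ => ∃ v, actRel M a w v ∧ sat M g v φ
  | _, g, w, .at_ k φ => sat M g (g k) φ
  | _, g, w, .store φ => sat M (extOpt g w) w φ
  | _, g, w, .ex φ => ∃ u, sat M (extOpt g u) w φ
/-- The set of admitted sentence constructors `O ⊆ {◇, @, ↓, ∃}`. -/
structure Ops where
  dia : Bool
  at_ : Bool
  store : Bool
  ex : Bool

mutual
/-- Gameboard trees: nodes labeled by signatures (here: the nominal type `N`),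
edges labeled by sentence operators admitted by `O`. -/
inductive GTree (R P : Type) (O : Ops) : Type → Type 1
  | leaf {N : Type} : GTree R P O N
  | node {N : Type} : GForest R P O N → GTree R P O N

/-- A list of labeled edges leaving a node of a gameboard tree. -/
inductive GForest (R P : Type) (O : Ops) : Type → Type 1
  | nil {N : Type} : GForest R P O N
  | cons {N : Type} : GEdge R P O N → GForest R P O N → GForest R P O N

/-- A labeled edge of a gameboard tree together with its target subtree;
`↓`- and `∃`-edges extend the signature by a fresh variable. -/
inductive GEdge (R P : Type) (O : Ops) : Type → Type 1
  | pos {N : Type} : O.dia = true → Act R → GTree R P O N → GEdge R P O N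
  | at_ {N : Type} : O.at_ = true → N → GTree R P O N → GEdge R P O N
  | store {N : Type} : O.store = true → GTree R P O (Option N) → GEdge R P O N
  | ex {N : Type} : O.ex = true → GTree R P O (Option N) → GEdge R P O N
  | idle {N : Type} : GTree R P O N → GEdge R P O N
end

/-- Canonical finite conjunction of a list of sentences. -/
def conjList {R P N : Type} (l : List (Sen R P N)) : Sen R P N :=
  Sen.conj l.length fun i => l.get i

/-- Canonical finite disjunction of a list of sentences. -/
def disjList {R P N : Type} (l : List (Sen R P N)) : Sen R P N :=
  Sen.neg (conjList (l.map Sen.neg))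

/-- Necessity `[a]φ := ¬⟨a⟩¬φ`. -/
def necSen {R P N : Type} (a : Act R) (φ : Sen R P N) : Sen R P N :=
  Sen.neg (Sen.pos a (Sen.neg φ))

/-- Universal quantification `∀x.φ := ¬∃x.¬φ`. -/
def allSen {R P N : Type} (φ : Sen R P (Option N)) : Sen R P N :=
  Sen.neg (Sen.ex (Sen.neg φ))

/-- All sign assignments to the elements of a list. -/
def signings {α : Type} : List α → List (List (α × Bool))
  | [] => [[]]
  | a :: l => (signings l).flatMap fun s => [(a, true) :: s, (a, false) :: s]

/-- A basic sentence: a nominal or a propositional symbol. -/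
def basicSen {R P N : Type} : N ⊕ P → Sen R P N :=
  Sum.elim Sen.nom Sen.prop

/-- Game sentences at a leaf: all complete conjunctions of literals over the
basic sentences, given enumerations `eN`, `eP` of the (finite) signature. -/
def leafTheta {R P N : Type} (eP : List P) (eN : List N) : List (Sen R P N) :=
  (signings (eN.map Sum.inl ++ eP.map Sum.inr)).map fun s =>
    conjList (s.map fun bs =>
      if bs.2 then basicSen bs.1 else Sen.neg (basicSen bs.1))

mutual
/-- The canonical list of game sentences `Θ_tr` over a gameboard tree. -/
def thetaT {R P : Type} {O : Ops} (eP : List P) :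
    {N : Type} → List N → GTree R P O N → List (Sen R P N)
  | _, eN, .leaf => leafTheta eP eN
  | _, eN, .node F => (thetaF eP eN F).map conjList

/-- Lists of choices of game sentences, one per edge of a forest. -/
def thetaF {R P : Type} {O : Ops} (eP : List P) :
    {N : Type} → List N → GForest R P O N → List (List (Sen R P N))
  | _, _, .nil => [[]]
  | _, eN, .cons e F =>
      (thetaE eP eN e).flatMap fun φ => (thetaF eP eN F).map fun l => φ :: l

/-- The possible game sentences contributed by a single labeled edge. -/
def thetaE {R P : Type} {O : Ops} (eP : List P) :
    {N : Type} → List N → GEdge R P O N → List (Sen R P N)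
  | _, eN, .pos _ a t =>
      (thetaT eP eN t).sublists.map fun Γ =>
        conjList [conjList (Γ.map (Sen.pos a)), necSen a (disjList Γ)]
  | _, eN, .at_ _ k t => (thetaT eP eN t).map (Sen.at_ k)
  | _, eN, .store _ t => (thetaT eP (none :: eN.map some) t).map Sen.store
  | _, eN, .ex _ t =>
      (thetaT eP (none :: eN.map some) t).sublists.map fun Γ =>
        conjList [conjList (Γ.map Sen.ex), allSen (disjList Γ)]
  | _, eN, .idle t => thetaT eP eN t
end

/-- The sentences of the fragment determined by the admitted operators `O`. -/
inductive InFrag {R P : Type} (O : Ops) : {N : Type} → Sen R P N → Prop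
  | prop {N : Type} (p : P) : InFrag O (Sen.prop (N := N) p)
  | nom {N : Type} (k : N) : InFrag O (Sen.nom (R := R) (P := P) k)
  | conj {N : Type} {n : ℕ} {f : Fin n → Sen R P N} :
      (∀ i, InFrag O (f i)) → InFrag O (Sen.conj n f)
  | neg {N : Type} {φ : Sen R P N} : InFrag O φ → InFrag O (Sen.neg φ)
  | pos {N : Type} {φ : Sen R P N} (a : Act R) :
      O.dia = true → InFrag O φ → InFrag O (Sen.pos a φ)
  | at_ {N : Type} {φ : Sen R P N} (k : N) :
      O.at_ = true → InFrag O φ → InFrag O (Sen.at_ k φ)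
  | store {N : Type} {φ : Sen R P (Option N)} :
      O.store = true → InFrag O φ → InFrag O (Sen.store φ)
  | ex {N : Type} {φ : Sen R P (Option N)} :
      O.ex = true → InFrag O φ → InFrag O (Sen.ex φ)

section Aux
variable {R P : Type} {O : Ops}

theorem sat_conjList {W : Type} (M : Kripke R P W) {N : Type} (g : N → W) (w : W)
    (l : List (Sen R P N)) : sat M g w (conjList l) ↔ ∀ ψ ∈ l, sat M g w ψ := by
  simp only [conjList, sat]
  constructor
  · intro h ψ hψ
    obtain ⟨i, rfl⟩ := List.mem_iff_get.mp hψ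
    exact h i
  · intro h i
    exact h _ (List.get_mem _ _)

theorem sat_disjList {W : Type} (M : Kripke R P W) {N : Type} (g : N → W) (w : W)
    (l : List (Sen R P N)) : sat M g w (disjList l) ↔ ∃ ψ ∈ l, sat M g w ψ := by
  rw [disjList]
  show ¬ _ ↔ _
  rw [sat_conjList]
  constructor
  · intro h
    by_contra hc
    push_neg at hc
    refine h fun ψ hψ => ?_
    obtain ⟨a, ha, rfl⟩ := List.mem_map.mp hψ
    exact fun hs => hc a ha hs
  · rintro ⟨ψ, hψ, hs⟩ h
    exact h _ (List.mem_map_of_mem hψ) hs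

theorem mem_signings_map {α : Type} (f : α → Bool) :
    ∀ l : List α, (l.map fun a => (a, f a)) ∈ signings l
  | [] => by simp [signings]
  | a :: l => by
    simp only [signings, List.mem_flatMap, List.map_cons]
    exact ⟨_, mem_signings_map f l, by cases f a <;> simp⟩

theorem map_fst_of_mem_signings {α : Type} :
    ∀ {l : List α} {s : List (α × Bool)}, s ∈ signings l → s.map Prod.fst = l
  | [], s, h => by simp [signings] at h; simp [h]
  | a :: l, s, h => by
    simp only [signings, List.mem_flatMap, List.mem_cons] at h
    obtain ⟨s', hs', h⟩ := h
    simp only [List.mem_cons, List.not_mem_nil, or_false] at h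
    rcases h with rfl | rfl <;> simp [map_fst_of_mem_signings hs']

end Aux
section Aux2
variable {R P : Type} {O : Ops}

/-- The literal determined by a signed basic sentence. -/
def litOf {N : Type} (bs : (N ⊕ P) × Bool) : Sen R P N :=
  if bs.2 then basicSen bs.1 else Sen.neg (basicSen bs.1)

theorem leaf_exhaust {N : Type} (eP : List P) (eN : List N) {W : Type}
    (M : Kripke R P W) (g : N → W) (w : W) :
    ∃ θ ∈ leafTheta (R := R) eP eN, sat M g w θ := by
  classical
  set f : (N ⊕ P) → Bool := fun b => decide (sat M g w (basicSen b)) with hf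
  set l : List (N ⊕ P) := eN.map Sum.inl ++ eP.map Sum.inr with hl
  refine ⟨conjList ((l.map fun a => (a, f a)).map fun bs =>
      if bs.2 then basicSen bs.1 else Sen.neg (basicSen bs.1)), ?_, ?_⟩
  · exact List.mem_map_of_mem (mem_signings_map f l)
  · rw [sat_conjList]
    intro ψ hψ
    obtain ⟨bs, hbs, rfl⟩ := List.mem_map.mp hψ
    obtain ⟨b, hb, rfl⟩ := List.mem_map.mp hbs
    by_cases hs : sat M g w (basicSen b) <;> simp [hf, hs, sat]

theorem leaf_determ {N : Type} (eP : List P) (eN : List N) {θ : Sen R P N}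
    (hθ : θ ∈ leafTheta (R := R) eP eN) (b : N ⊕ P)
    (hb : b ∈ eN.map Sum.inl ++ eP.map Sum.inr)
    {W W' : Type} (M : Kripke R P W) (M' : Kripke R P W')
    (g : N → W) (g' : N → W') (w : W) (w' : W')
    (h : sat M g w θ) (h' : sat M' g' w' θ) :
    (sat M g w (basicSen b) ↔ sat M' g' w' (basicSen b)) := by
  obtain ⟨s, hs, rfl⟩ := List.mem_map.mp hθ
  rw [sat_conjList] at h h'
  have hfst := map_fst_of_mem_signings hs
  have : b ∈ s.map Prod.fst := hfst ▸ hb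
  obtain ⟨⟨b', c⟩, hbc, rfl⟩ := List.mem_map.mp this
  have h1 := h _ (List.mem_map_of_mem
    (f := fun (bs : (N ⊕ P) × Bool) => if bs.2 then basicSen bs.1 else Sen.neg (basicSen bs.1)) hbc)
  have h2 := h' _ (List.mem_map_of_mem
    (f := fun (bs : (N ⊕ P) × Bool) => if bs.2 then basicSen bs.1 else Sen.neg (basicSen bs.1)) hbc)
  cases c with
  | true =>
    simp only [if_pos rfl] at h1 h2
    exact iff_of_true h1 h2
  | false =>
    simp only [Bool.false_eq_true, if_false] at h1 h2
    exact iff_of_false h1 h2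

/-- A forest of idle edges to the given list of trees. -/
def forestOfList : {N : Type} → List (GTree R P O N) → GForest R P O N
  | _, [] => .nil
  | _, t :: ts => .cons (.idle t) (forestOfList ts)

/-- The gameboard tree associated to a sentence. -/
def gameTree (O : Ops) : {N : Type} → Sen R P N → GTree R P O N
  | _, .prop _ => .leaf
  | _, .nom _ => .leaf
  | _, .conj n f => .node (forestOfList (List.ofFn fun i => gameTree O (f i)))
  | _, .neg φ => gameTree O φ
  | _, .pos a φ =>
      if h : O.dia = true then .node (.cons (.pos h a (gameTree O φ)) .nil) else .leaf
  | _, .at_ k φ =>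
      if h : O.at_ = true then .node (.cons (.at_ h k (gameTree O φ)) .nil) else .leaf
  | _, .store φ =>
      if h : O.store = true then .node (.cons (.store h (gameTree O φ)) .nil) else .leaf
  | _, .ex φ =>
      if h : O.ex = true then .node (.cons (.ex h (gameTree O φ)) .nil) else .leaf

theorem mem_thetaF_forestOfList {N : Type} (eP : List P) (eN : List N) :
    ∀ (ts : List (GTree R P O N)) (l : List (Sen R P N)),
    l ∈ thetaF eP eN (forestOfList ts) ↔
      List.Forall₂ (fun θ t => θ ∈ thetaT eP eN t) l ts
  | [], l => by
    simp only [forestOfList, thetaF, List.mem_singleton]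
    constructor
    · rintro rfl; exact List.Forall₂.nil
    · rintro h; cases h; rfl
  | t :: ts, l => by
    simp only [forestOfList, thetaF, thetaE, List.mem_flatMap, List.mem_map]
    constructor
    · rintro ⟨θ, hθ, l', hl', rfl⟩
      exact List.Forall₂.cons hθ ((mem_thetaF_forestOfList eP eN ts l').mp hl')
    · rintro h
      cases h with
      | cons hθ hl' =>
        exact ⟨_, hθ, _, (mem_thetaF_forestOfList eP eN ts _).mpr hl', rfl⟩

theorem mem_thetaT_single {N : Type} (eP : List P) (eN : List N)
    (e : GEdge R P O N) (θ : Sen R P N) :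
    θ ∈ thetaT eP eN (.node (.cons e .nil)) ↔
      ∃ ψ ∈ thetaE eP eN e, θ = conjList [ψ] := by
  simp only [thetaT, thetaF, List.mem_map, List.mem_flatMap, List.mem_singleton]
  constructor
  · rintro ⟨l, ⟨ψ, hψ, a, rfl, rfl⟩, rfl⟩
    exact ⟨ψ, hψ, rfl⟩
  · rintro ⟨ψ, hψ, rfl⟩
    exact ⟨[ψ], ⟨ψ, hψ, [], rfl, rfl⟩, rfl⟩

end Aux2
section Aux3
variable {R P : Type} {O : Ops}

mutual
theorem exhaustT (eP : List P) :
    ∀ {N : Type} (eN : List N) (tr : GTree R P O N) {W : Type}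
      (M : Kripke R P W) (g : N → W) (w : W),
      ∃ θ ∈ thetaT eP eN tr, sat M g w θ
  | _, eN, .leaf, _, M, g, w => leaf_exhaust eP eN M g w
  | _, eN, .node F, _, M, g, w => by
    obtain ⟨l, hl, hsat⟩ := exhaustF eP eN F M g w
    exact ⟨conjList l, List.mem_map_of_mem hl, (sat_conjList M g w l).mpr hsat⟩

theorem exhaustF (eP : List P) :
    ∀ {N : Type} (eN : List N) (F : GForest R P O N) {W : Type}
      (M : Kripke R P W) (g : N → W) (w : W),
      ∃ l ∈ thetaF eP eN F, ∀ ψ ∈ l, sat M g w ψ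
  | _, eN, .nil, _, M, g, w => ⟨[], by simp [thetaF], by simp⟩
  | _, eN, .cons e F, _, M, g, w => by
    obtain ⟨ψ, hψ, hsψ⟩ := exhaustE eP eN e M g w
    obtain ⟨l, hl, hsl⟩ := exhaustF eP eN F M g w
    refine ⟨ψ :: l, ?_, ?_⟩
    · simp only [thetaF, List.mem_flatMap, List.mem_map]
      exact ⟨ψ, hψ, l, hl, rfl⟩
    · intro χ hχ
      rcases List.mem_cons.mp hχ with rfl | hχ
      · exact hsψ
      · exact hsl χ hχ

theorem exhaustE (eP : List P) :
    ∀ {N : Type} (eN : List N) (e : GEdge R P O N) {W : Type}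
      (M : Kripke R P W) (g : N → W) (w : W),
      ∃ ψ ∈ thetaE eP eN e, sat M g w ψ
  | _, eN, .pos h a t, _, M, g, w => by
    classical
    set Γ : List (Sen R P _) :=
      (thetaT eP eN t).filter
        (fun θ => decide (∃ v, actRel M a w v ∧ sat M g v θ)) with hΓ
    refine ⟨conjList [conjList (Γ.map (Sen.pos a)), necSen a (disjList Γ)],
      List.mem_map_of_mem (List.mem_sublists.mpr (List.filter_sublist)), ?_⟩
    rw [sat_conjList]
    intro χ hχ
    rcases List.mem_cons.mp hχ with rfl | hχ
    · rw [sat_conjList]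
      intro ξ hξ
      obtain ⟨θ, hθ, rfl⟩ := List.mem_map.mp hξ
      have := List.of_mem_filter hθ
      rw [decide_eq_true_iff] at this
      obtain ⟨v, hv, hsv⟩ := this
      exact ⟨v, hv, hsv⟩
    · rcases List.mem_cons.mp hχ with rfl | hχ
      · rintro ⟨v, hv, hnd⟩
        obtain ⟨θ, hθ, hsθ⟩ := exhaustT eP eN t M g v
        refine hnd ((sat_disjList M g v Γ).mpr ⟨θ, ?_, hsθ⟩)
        exact List.mem_filter.mpr ⟨hθ, decide_eq_true ⟨v, hv, hsθ⟩⟩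
      · simp at hχ
  | _, eN, .at_ h k t, _, M, g, w => by
    obtain ⟨θ, hθ, hsθ⟩ := exhaustT eP eN t M g (g k)
    exact ⟨Sen.at_ k θ, List.mem_map_of_mem hθ, hsθ⟩
  | _, eN, .store h t, _, M, g, w => by
    obtain ⟨θ, hθ, hsθ⟩ := exhaustT eP (none :: eN.map some) t M (extOpt g w) w
    exact ⟨Sen.store θ, List.mem_map_of_mem hθ, hsθ⟩
  | _, eN, .ex h t, _, M, g, w => by
    classical
    set Γ : List (Sen R P _) :=
      (thetaT eP (none :: eN.map some) t).filter
        (fun θ => decide (∃ u, sat M (extOpt g u) w θ)) with hΓ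
    refine ⟨conjList [conjList (Γ.map Sen.ex), allSen (disjList Γ)],
      List.mem_map_of_mem (List.mem_sublists.mpr (List.filter_sublist)), ?_⟩
    rw [sat_conjList]
    intro χ hχ
    rcases List.mem_cons.mp hχ with rfl | hχ
    · rw [sat_conjList]
      intro ξ hξ
      obtain ⟨θ, hθ, rfl⟩ := List.mem_map.mp hξ
      have := List.of_mem_filter hθ
      rw [decide_eq_true_iff] at this
      exact this
    · rcases List.mem_cons.mp hχ with rfl | hχ
      · rintro ⟨u, hnd⟩
        obtain ⟨θ, hθ, hsθ⟩ := exhaustT eP (none :: eN.map some) t M (extOpt g u) w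
        refine hnd ((sat_disjList M _ w Γ).mpr ⟨θ, ?_, hsθ⟩)
        exact List.mem_filter.mpr ⟨hθ, decide_eq_true ⟨u, hsθ⟩⟩
      · simp at hχ
  | _, eN, .idle t, _, M, g, w => exhaustT eP eN t M g w
end

end Aux3
section Aux4
variable {R P : Type} {O : Ops}

theorem determ (eP : List P) (heP : ∀ p : P, p ∈ eP) {N : Type} {φ : Sen R P N}
    (hφ : InFrag O φ) :
    ∀ (eN : List N), (∀ k : N, k ∈ eN) →
    ∀ θ ∈ thetaT eP eN (gameTree O φ),
    ∀ {W W' : Type} (M : Kripke R P W) (M' : Kripke R P W')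
      (g : N → W) (g' : N → W') (w : W) (w' : W'),
      sat M g w θ → sat M' g' w' θ → (sat M g w φ ↔ sat M' g' w' φ) := by
  induction hφ with
  | prop p =>
    intro eN heN θ hθ W W' M M' g g' w w' h h'
    exact leaf_determ eP eN hθ (Sum.inr p)
      (List.mem_append_right _ (List.mem_map_of_mem (heP p))) M M' g g' w w' h h'
  | nom k =>
    intro eN heN θ hθ W W' M M' g g' w w' h h'
    exact leaf_determ eP eN hθ (Sum.inl k)
      (List.mem_append_left _ (List.mem_map_of_mem (heN k))) M M' g g' w w' h h'
  | conj hf ih =>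
    intro eN heN θ hθ W W' M M' g g' w w' h h'
    rename_i N n f
    simp only [gameTree, thetaT, List.mem_map] at hθ
    obtain ⟨l, hl, rfl⟩ := hθ
    rw [mem_thetaF_forestOfList] at hl
    rw [sat_conjList] at h h'
    have hlen : l.length = n := by
      have := List.Forall₂.length_eq hl
      simpa using this
    have key : ∀ i : Fin n, sat M g w (f i) ↔ sat M' g' w' (f i) := by
      intro i
      have hi : (i : ℕ) < l.length := by omega
      have hmem : l.get ⟨i, hi⟩ ∈ thetaT eP eN (gameTree O (f i)) := by
        have := (List.forall₂_iff_get.mp hl).2 i hi (by simp)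
        simpa using this
      exact ih i eN heN _ hmem M M' g g' w w'
        (h _ (List.get_mem _ _)) (h' _ (List.get_mem _ _))
    exact forall_congr' key
  | neg hψ ih =>
    intro eN heN θ hθ W W' M M' g g' w w' h h'
    exact not_congr (ih eN heN θ hθ M M' g g' w w' h h')
  | pos a hdia hψ ih =>
    rename_i N0 ψ0
    intro eN heN θ hθ W W' M M' g g' w w' h h'
    rw [gameTree, dif_pos hdia, mem_thetaT_single] at hθ
    obtain ⟨ψ, hψm, rfl⟩ := hθ
    simp only [thetaE, List.mem_map, List.mem_sublists] at hψm
    obtain ⟨Γ, hΓ, rfl⟩ := hψm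
    rw [sat_conjList] at h h'
    have h := (sat_conjList ..).mp (h _ (List.mem_singleton_self _))
    have h' := (sat_conjList ..).mp (h' _ (List.mem_singleton_self _))
    have hpos := h _ (List.mem_cons_self)
    have hpos' := h' _ (List.mem_cons_self)
    have hnec := h _ (List.mem_cons_of_mem _ (List.mem_cons_self))
    have hnec' := h' _ (List.mem_cons_of_mem _ (List.mem_cons_self))
    rw [sat_conjList] at hpos hpos'
    have main : ∀ {V V' : Type} (K : Kripke R P V) (K' : Kripke R P V')
        (e : N0 → V) (e' : N0 → V') (v : V) (v' : V'),
        (∀ ξ ∈ Γ.map (Sen.pos a), sat K e v ξ) →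
        sat K' e' v' (necSen a (disjList Γ)) →
        sat K' e' v' (Sen.pos a ψ0) → sat K e v (Sen.pos a ψ0) := by
      intro V V' K K' e e' v v' hp hn hs
      obtain ⟨u', hu', hsu'⟩ := hs
      have hd : sat K' e' u' (disjList Γ) := by
        by_contra hc
        exact hn ⟨u', hu', hc⟩
      obtain ⟨θ', hθ'Γ, hsθ'⟩ := (sat_disjList K' e' u' Γ).mp hd
      obtain ⟨u, hu, hsθu⟩ := hp _ (List.mem_map_of_mem hθ'Γ)
      exact ⟨u, hu, (ih eN heN θ' (hΓ.subset hθ'Γ) K' K e' e u' u hsθ' hsθu).mp hsu'⟩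
    exact ⟨fun hs => main M' M g' g w' w hpos' hnec hs,
           fun hs => main M M' g g' w w' hpos hnec' hs⟩
  | at_ k hat hψ ih =>
    intro eN heN θ hθ W W' M M' g g' w w' h h'
    rw [gameTree, dif_pos hat, mem_thetaT_single] at hθ
    obtain ⟨ψ, hψm, rfl⟩ := hθ
    simp only [thetaE, List.mem_map] at hψm
    obtain ⟨θ', hθ', rfl⟩ := hψm
    rw [sat_conjList] at h h'
    have h := h _ (List.mem_singleton_self _)
    have h' := h' _ (List.mem_singleton_self _)
    exact ih eN heN θ' hθ' M M' g g' (g k) (g' k) h h'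
  | store hst hψ ih =>
    rename_i N0 ψ0
    intro eN heN θ hθ W W' M M' g g' w w' h h'
    rw [gameTree, dif_pos hst, mem_thetaT_single] at hθ
    obtain ⟨ψ, hψm, rfl⟩ := hθ
    simp only [thetaE, List.mem_map] at hψm
    obtain ⟨θ', hθ', rfl⟩ := hψm
    rw [sat_conjList] at h h'
    have h := h _ (List.mem_singleton_self _)
    have h' := h' _ (List.mem_singleton_self _)
    have heN' : ∀ o : Option N0, o ∈ (none :: eN.map some) := by
      rintro (_ | k)
      · exact List.mem_cons_self
      · exact List.mem_cons_of_mem _ (List.mem_map_of_mem (heN k))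
    exact ih (none :: eN.map some) heN' θ' hθ' M M'
      (extOpt g w) (extOpt g' w') w w' h h'
  | ex hex hψ ih =>
    rename_i N0 ψ0
    intro eN heN θ hθ W W' M M' g g' w w' h h'
    rw [gameTree, dif_pos hex, mem_thetaT_single] at hθ
    obtain ⟨ψ, hψm, rfl⟩ := hθ
    simp only [thetaE, List.mem_map, List.mem_sublists] at hψm
    obtain ⟨Γ, hΓ, rfl⟩ := hψm
    rw [sat_conjList] at h h'
    have h := (sat_conjList M g w _).mp (h _ (List.mem_singleton_self _))
    have h' := (sat_conjList M' g' w' _).mp (h' _ (List.mem_singleton_self _))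
    have hpos := h _ (List.mem_cons_self)
    have hpos' := h' _ (List.mem_cons_self)
    have hall := h _ (List.mem_cons_of_mem _ (List.mem_cons_self))
    have hall' := h' _ (List.mem_cons_of_mem _ (List.mem_cons_self))
    rw [sat_conjList] at hpos hpos'
    have heN' : ∀ o : Option N0, o ∈ (none :: eN.map some) := by
      rintro (_ | k)
      · exact List.mem_cons_self
      · exact List.mem_cons_of_mem _ (List.mem_map_of_mem (heN k))
    have main : ∀ {V V' : Type} (K : Kripke R P V) (K' : Kripke R P V')
        (e : N0 → V) (e' : N0 → V') (v : V) (v' : V'),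
        (∀ ξ ∈ Γ.map Sen.ex, sat K e v ξ) →
        sat K' e' v' (allSen (disjList Γ)) →
        sat K' e' v' (Sen.ex ψ0) → sat K e v (Sen.ex ψ0) := by
      intro V V' K K' e e' v v' hp hn hs
      obtain ⟨u', hsu'⟩ := hs
      have hd : sat K' (extOpt e' u') v' (disjList Γ) := by
        by_contra hc
        exact hn ⟨u', hc⟩
      obtain ⟨θ', hθ'Γ, hsθ'⟩ := (sat_disjList K' (extOpt e' u') v' Γ).mp hd
      obtain ⟨u, hsθu⟩ := hp _ (List.mem_map_of_mem hθ'Γ)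
      exact ⟨u, (ih (none :: eN.map some) heN' θ' (hΓ.subset hθ'Γ) K' K
        (extOpt e' u') (extOpt e u) v' v hsθ' hsθu).mp hsu'⟩
    exact ⟨fun hs => main M' M g' g w' w hpos' hall hs,
           fun hs => main M M' g g' w w' hpos hall' hs⟩
/-- every sentence of the fragment, over a finite signature, is
semantically equivalent to a finite disjunction of game sentences over some
gameboard tree rooted at that signature. -/
theorem sentence_equiv_disjunction_of_game_sentences {R P N : Type} {O : Ops}
    (eP : List P) (heP : ∀ p : P, p ∈ eP)
    (eN : List N) (heN : ∀ k : N, k ∈ eN)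
    (eR : List R) (heR : ∀ r : R, r ∈ eR)
    (φ : Sen R P N) (hφ : InFrag O φ) :
    ∃ (tr : GTree R P O N) (Ψ : List (Sen R P N)),
      (∀ ψ ∈ Ψ, ψ ∈ thetaT eP eN tr) ∧
      ∀ (W : Type) (M : Kripke R P W) (g : N → W) (w : W),
        sat M g w φ ↔ sat M g w (disjList Ψ) := by

  classical
  refine ⟨gameTree O φ, (thetaT eP eN (gameTree O φ)).filter
    (fun θ => decide (∃ (W : Type) (M : Kripke R P W) (g : N → W) (w : W),
      sat M g w θ ∧ sat M g w φ)), ?_, ?_⟩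
  · intro ψ hψ
    exact List.mem_of_mem_filter hψ
  · intro W M g w
    rw [sat_disjList]
    constructor
    · intro hs
      obtain ⟨θ, hθ, hsθ⟩ := exhaustT eP eN (gameTree O φ) M g w
      exact ⟨θ, List.mem_filter.mpr ⟨hθ, decide_eq_true ⟨W, M, g, w, hsθ, hs⟩⟩, hsθ⟩
    · rintro ⟨θ, hθ, hsθ⟩
      have h2 := List.of_mem_filter hθ
      rw [decide_eq_true_iff] at h2
      obtain ⟨W', M', g', w', hsθ', hφ'⟩ := h2
      exact (determ eP heP hφ eN heN θ (List.mem_of_mem_filter hθ)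
        M' M g' g w' w hsθ' hsθ).mp hφ'
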